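/- In ℝ⁴ with ℓ(v,v) = 2v₀v₃ − v₁² − v₂² and γ_n as in the preceding example, for any u, v ∈ ℝ⁴ and n ∈ ℤ one has ℓ(γ_n(v) − u, γ_n(v) − u) = ℓ(v−u, v−u) + 2n(u₂v₃ − u₃v₂ + u₁ − v₁) − n²(1 + u₃v₃). Consequently, if u₃ > 0 and v₃ < −1/u₃, then ℓ(γ_n(v) − u, γ_n(v) − u) > 0 for all sufficiently large n, i.e., γ_n(v) eventually lies in the causal past or future of u. -/
import Mathlib


/-- The Lorentzian form `ℓ(u,v) = u₀v₃ + u₃v₀ − u₁v₁ − u₂v₂` on `ℝ⁴`. -/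
noncomputable def ellForm (u v : Fin 4 → ℝ) : ℝ :=
  u 0 * v 3 + u 3 * v 0 - u 1 * v 1 - u 2 * v 2

/-- The affine transformation `γ_n(v) = λ(n)v + τ(n)` of Example 2.3. -/
noncomputable def gammaEx (n : ℤ) (v : Fin 4 → ℝ) : Fin 4 → ℝ :=
  ![v 0 + (n : ℝ) * v 2 + ((n : ℝ) ^ 2 / 2) * v 3, v 1 + (n : ℝ), v 2 + (n : ℝ) * v 3, v 3]

/-- Example 2.3, formula (13): for all `u, v ∈ ℝ⁴` and `n ∈ ℤ`,
`ℓ(γ_n(v) − u, γ_n(v) − u) = ℓ(v−u,v−u) + 2n(u₂v₃ − u₃v₂ + u₁ − v₁) − n²(1 + u₃v₃)`;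
consequently, if `u₃ > 0` and `v₃ < −1/u₃`, then `ℓ(γ_n(v) − u, γ_n(v) − u) > 0` for
all sufficiently large `n`. -/
theorem example_orbit_identity (u v : Fin 4 → ℝ) :
    (∀ n : ℤ,
      ellForm (gammaEx n v - u) (gammaEx n v - u) =
        ellForm (v - u) (v - u) + 2 * (n : ℝ) * (u 2 * v 3 - u 3 * v 2 + u 1 - v 1)
          - (n : ℝ) ^ 2 * (1 + u 3 * v 3)) ∧
      (0 < u 3 → v 3 < -(1 / u 3) →
        ∃ N : ℤ, ∀ n : ℤ, N ≤ n →
          0 < ellForm (gammaEx n v - u) (gammaEx n v - u)) := by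
  have key : ∀ n : ℤ,
      ellForm (gammaEx n v - u) (gammaEx n v - u) =
        ellForm (v - u) (v - u) + 2 * (n : ℝ) * (u 2 * v 3 - u 3 * v 2 + u 1 - v 1)
          - (n : ℝ) ^ 2 * (1 + u 3 * v 3) := by
    intro n
    simp only [ellForm, gammaEx, Pi.sub_apply, Matrix.cons_val_zero, Matrix.cons_val_one,
      Matrix.head_cons, Matrix.cons_val_two, Matrix.tail_cons, Matrix.cons_val_three]
    ring
  refine ⟨key, fun hu hv => ?_⟩
  set A := ellForm (v - u) (v - u) with hA
  set B := u 2 * v 3 - u 3 * v 2 + u 1 - v 1 with hB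
  have hc : 0 < -(1 + u 3 * v 3) := by
    have : u 3 * v 3 < u 3 * (-(1 / u 3)) := by
      exact mul_lt_mul_of_pos_left hv hu
    have h1 : u 3 * (-(1 / u 3)) = -1 := by
      field_simp
    nlinarith
  set c := -(1 + u 3 * v 3) with hcdef
  obtain ⟨N0, hN0⟩ := exists_int_gt ((|A| + 2 * |B| + 1) / c)
  refine ⟨max N0 1, fun n hn => ?_⟩
  have hn1 : (1 : ℤ) ≤ n := le_trans (le_max_right _ _) hn
  have hnr : (1 : ℝ) ≤ (n : ℝ) := by exact_mod_cast hn1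
  have hnN0 : (N0 : ℝ) ≤ (n : ℝ) := by exact_mod_cast le_trans (le_max_left _ _) hn
  have h2 : (|A| + 2 * |B| + 1) < (n : ℝ) * c := by
    have := (div_lt_iff₀ hc).mp (lt_of_lt_of_le hN0 hnN0)
    linarith [this]
  have habs1 : -|A| ≤ A := neg_abs_le A
  have habs2 : -|B| ≤ B := neg_abs_le B
  rw [key n]
  have : ellForm (v - u) (v - u) + 2 * (n : ℝ) * B - (n : ℝ) ^ 2 * (1 + u 3 * v 3)
      = A + 2 * (n : ℝ) * B + (n : ℝ) ^ 2 * c := by rw [hcdef]; ring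
  rw [this]
  have hpos : (0:ℝ) < (n:ℝ) := by linarith
  have h3 : (n:ℝ) * (|A| + 2 * |B| + 1) < (n:ℝ) ^ 2 * c := by nlinarith
  have h4 : |A| ≤ (n:ℝ) * |A| := le_mul_of_one_le_left (abs_nonneg A) hnr
  have h5 : -(2 * (n:ℝ) * |B|) ≤ 2 * (n:ℝ) * B := by nlinarith
  nlinarith
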